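/- arXiv:2504.14968 — 2 statements merged into one kernel-verified Lean document; each statement's English description precedes it below -/
import Mathlib

section
/- Let M be a positive integer and for each j = 1, …, M let (R_j(n))_{n≥1} be a positive, reversible, and strictly increasing ILRS. Let α be a Pisot or Salem number and let H be a positive integer. Then there exists a positive integer m_0 such that for each m ≥ m_0 one can find a positive integer L such that the numbers ⌊α^{(R_1∘⋯∘R_M)(Ln+m)}⌋ + h are composite for all integers h with |h| ≤ H and all integers n ≥ 1. -/
open Filter Polynomial

/-- `R` is an inhomogeneous linear recurrence sequence (ILRS) of order `d`:
there are integers `a 0, …, a (d-1), b` with `a 0 ≠ 0` such that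
`R (n+d) = a (d-1) * R (n+d-1) + ⋯ + a 0 * R n + b` for all `n ≥ 1`. -/
def IsILRS (R : ℕ → ℤ) (d : ℕ) : Prop :=
  1 ≤ d ∧ ∃ (a : ℕ → ℤ) (b : ℤ), a 0 ≠ 0 ∧
    ∀ n : ℕ, 1 ≤ n → R (n + d) = (∑ i ∈ Finset.range d, a i * R (n + i)) + b

/-- `R` is a reversible ILRS of order `d`, i.e. one may take `a 0 = ±1`. -/
def IsRevILRS (R : ℕ → ℤ) (d : ℕ) : Prop :=
  1 ≤ d ∧ ∃ (a : ℕ → ℤ) (b : ℤ), (a 0 = 1 ∨ a 0 = -1) ∧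
    ∀ n : ℕ, 1 ≤ n → R (n + d) = (∑ i ∈ Finset.range d, a i * R (n + i)) + b

/-- The composition `(R 0 ∘ R 1 ∘ ⋯ ∘ R (M-1)) (n)` (the identity when `M = 0`),
using `Int.toNat` to feed integer values back in as arguments. -/
def iterComp : (M : ℕ) → (Fin M → ℕ → ℤ) → ℕ → ℤ
  | 0, _, n => (n : ℤ)
  | M + 1, R, n => R 0 (iterComp M (fun j => R j.succ) n).toNat

/-- A Pisot number: a real algebraic integer `α > 1` all of whose conjugates
other than `α` itself lie in the open unit disk. -/
def IsPisot (α : ℝ) : Prop :=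
  1 < α ∧ IsIntegral ℤ α ∧
    ∀ z : ℂ, Polynomial.aeval z (minpoly ℤ α) = 0 → z ≠ (α : ℂ) → ‖z‖ < 1

/-- A Salem number: a real reciprocal algebraic integer `α > 1` of degree at least 4
whose conjugates other than `α` and `1/α` all have modulus 1. -/
def IsSalem (α : ℝ) : Prop :=
  1 < α ∧ IsIntegral ℤ α ∧ 4 ≤ (minpoly ℤ α).natDegree ∧
    Polynomial.aeval ((α : ℂ)⁻¹) (minpoly ℤ α) = 0 ∧
    ∀ z : ℂ, Polynomial.aeval z (minpoly ℤ α) = 0 → z ≠ (α : ℂ) → z ≠ (α : ℂ)⁻¹ →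
      ‖z‖ = 1

/-- An integer is composite if it is greater than 1 and not prime. -/
def IsCompositeInt (N : ℤ) : Prop := 1 < N ∧ ¬ Prime N


section Auxiliary
set_option maxHeartbeats 1000000






lemma natModEq_intModEq {P a b : ℕ} (h : a ≡ b [MOD P]) : (a:ℤ) ≡ (b:ℤ) [ZMOD (P:ℕ)] := by
  unfold Int.ModEq
  have h' : a % P = b % P := h
  have : ((a % P : ℕ) : ℤ) = ((b % P : ℕ) : ℤ) := by rw [h']
  simpa [Int.natCast_mod] using this

lemma intModEq_natModEq {P : ℕ} {x y : ℤ} (hx : 0 ≤ x) (hy : 0 ≤ y)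
    (h : x ≡ y [ZMOD (P:ℕ)]) : x.toNat ≡ y.toNat [MOD P] := by
  unfold Nat.ModEq
  have h' : x % (P:ℤ) = y % P := h
  have : ((x.toNat % P : ℕ) : ℤ) = ((y.toNat % P : ℕ) : ℤ) := by
    push_cast [Int.toNat_of_nonneg hx, Int.toNat_of_nonneg hy]
    exact h'
  exact_mod_cast this

lemma per_ext {β : Type*} (f : ℕ → β) (P θ : ℕ) (hper : ∀ n, θ ≤ n → f (n + P) = f n) :
    ∀ n n', θ ≤ n → θ ≤ n' → n ≡ n' [MOD P] → f n = f n' := by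
  have key : ∀ (q n : ℕ), θ ≤ n → f (n + P * q) = f n := by
    intro q
    induction q with
    | zero => intro n _; simp
    | succ q ih =>
      intro n hn
      have : n + P * (q + 1) = (n + P * q) + P := by ring
      rw [this, hper _ (le_trans hn (Nat.le_add_right _ _)), ih n hn]
  intro n n' hn hn' hmod
  rcases le_total n n' with hle | hle
  · obtain ⟨c, hc⟩ := (Nat.modEq_iff_dvd' hle).mp hmod
    have : n' = n + P * c := by omega
    rw [this, key]; exact hn
  · obtain ⟨c, hc⟩ := (Nat.modEq_iff_dvd' hle).mp hmod.symm
    have : n = n' + P * c := by omega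
    rw [this, key]; exact hn'

/-- Pure periodicity of a reversible ILRS modulo T. -/
lemma revILRS_periodic (R : ℕ → ℤ) (dd : ℕ) (hrev : IsRevILRS R dd) (T : ℕ) (hT : 1 ≤ T) :
    ∃ P, 1 ≤ P ∧ ∀ n n', 1 ≤ n → 1 ≤ n' → n ≡ n' [MOD P] → R n ≡ R n' [ZMOD (T:ℕ)] := by
  obtain ⟨hd, a, b, ha0, hrec⟩ := hrev
  haveI : NeZero T := ⟨by omega⟩
  classical
  set r : ℕ → ZMod T := fun n => ((R n : ℤ) : ZMod T) with hr
  set s : ℕ → (Fin dd → ZMod T) := fun n i => r (n + i) with hs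
  have Fwd : ∀ n n', 1 ≤ n → 1 ≤ n' → s n = s n' → s (n+1) = s (n'+1) := by
    intro n n' hn hn' heq
    funext i
    rcases i with ⟨iv, hiv⟩
    by_cases hlt : iv + 1 < dd
    · have h1 : s (n+1) ⟨iv, hiv⟩ = s n ⟨iv+1, hlt⟩ := by
        show r (n+1+iv) = r (n + (iv+1)); ring_nf
      have h2 : s (n'+1) ⟨iv, hiv⟩ = s n' ⟨iv+1, hlt⟩ := by
        show r (n'+1+iv) = r (n' + (iv+1)); ring_nf
      rw [h1, h2, heq]
    · have harg : ∀ m : ℕ, m + 1 + iv = m + dd := by omega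
      have hval : ∀ m : ℕ, 1 ≤ m →
          r (m + dd) = (∑ k ∈ Finset.range dd, (a k : ZMod T) * r (m + k)) + (b : ZMod T) := by
        intro m hm
        show ((R (m+dd) : ℤ) : ZMod T) = _
        rw [hrec m hm]
        push_cast
        rfl
      show r (n+1+iv) = r (n'+1+iv)
      rw [harg, harg, hval n hn, hval n' hn']
      congr 1
      apply Finset.sum_congr rfl
      intro k hk
      have hkd : k < dd := Finset.mem_range.mp hk
      have : r (n + k) = r (n' + k) := congrFun heq ⟨k, hkd⟩
      rw [this]
  have Bwd : ∀ n n', 1 ≤ n → 1 ≤ n' → s (n+1) = s (n'+1) → s n = s n' := by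
    intro n n' hn hn' heq
    have hsh : ∀ k, 1 ≤ k → k ≤ dd → r (n + k) = r (n' + k) := by
      intro k hk1 hkd
      have hklt : k - 1 < dd := by omega
      have := congrFun heq ⟨k - 1, hklt⟩
      have e1 : n + 1 + (k-1) = n + k := by omega
      have e2 : n' + 1 + (k-1) = n' + k := by omega
      simpa [hs, e1, e2] using this
    have key : ∀ m : ℕ, 1 ≤ m →
        r m = ((a 0 : ℤ) : ZMod T) * ((r (m + dd) - ∑ k ∈ Finset.range (dd - 1),
          ((a (k+1) : ℤ) : ZMod T) * r (m + (k+1))) - ((b:ℤ) : ZMod T)) := by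
      intro m hm
      have hrecm := hrec m hm
      have hdd : dd = (dd - 1) + 1 := by omega
      have hsum : ∑ i ∈ Finset.range dd, a i * R (m + i)
          = (∑ i ∈ Finset.range (dd-1), a (i+1) * R (m + (i+1))) + a 0 * R (m + 0) := by
        conv_lhs => rw [hdd]
        rw [Finset.sum_range_succ']
      rw [hsum] at hrecm
      have hZ : R m = (a 0) * ((R (m + dd) - ∑ i ∈ Finset.range (dd-1), a (i+1) * R (m + (i+1))) - b) := by
        have h2 : a 0 * R m = R (m + dd) - (∑ i ∈ Finset.range (dd-1), a (i+1) * R (m + (i+1))) - b := by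
          simp only [add_zero] at hrecm
          omega
        rcases ha0 with h | h <;> rw [h] at h2 ⊢ <;> omega
      show ((R m : ℤ) : ZMod T) = _
      rw [hZ]
      push_cast
      ring
    funext i
    rcases i with ⟨iv, hiv⟩
    rcases Nat.eq_zero_or_pos iv with h0 | h1
    · subst h0
      show r (n + 0) = r (n' + 0)
      simp only [add_zero]
      rw [key n hn, key n' hn']
      congr 2
      · congr 1
        · exact hsh dd hd le_rfl
        · apply Finset.sum_congr rfl
          intro k hk
          have hkd : k < dd - 1 := Finset.mem_range.mp hk
          rw [hsh (k+1) (by omega) (by omega)]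
    · show r (n + iv) = r (n' + iv)
      exact hsh iv h1 (by omega)
  -- pigeonhole
  obtain ⟨i, j, hne, heq⟩ := Fintype.exists_ne_map_eq_of_card_lt
    (fun i : Fin (Fintype.card (Fin dd → ZMod T) + 1) => s (1 + i)) (by simp)
  -- wlog i < j
  have main : ∀ (i j : ℕ), i < j → s (1 + i) = s (1 + j) →
      ∃ P, 1 ≤ P ∧ ∀ n n', 1 ≤ n → 1 ≤ n' → n ≡ n' [MOD P] → R n ≡ R n' [ZMOD (T:ℕ)] := by
    intro i j hij heq
    set P := j - i with hP
    have hP1 : 1 ≤ P := by omega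
    -- backward chain
    have back : ∀ k, k ≤ i → s (1 + i - k) = s (1 + j - k) := by
      intro k
      induction k with
      | zero => intro _; simpa using heq
      | succ k ih =>
        intro hk
        have hki : k ≤ i := by omega
        have prev := ih hki
        have e1 : 1 + i - (k+1) + 1 = 1 + i - k := by omega
        have e2 : 1 + j - (k+1) + 1 = 1 + j - k := by omega
        apply Bwd _ _ (by omega) (by omega)
        rw [e1, e2]; exact prev
    have base : s 1 = s (1 + P) := by
      have := back i le_rfl
      have e1 : 1 + i - i = 1 := by omega
      have e2 : 1 + j - i = 1 + P := by omega
      rwa [e1, e2] at this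
    -- forward chain
    have fwd : ∀ n, 1 ≤ n → s (n + P) = s n := by
      intro n hn
      induction n with
      | zero => omega
      | succ n ih =>
        rcases Nat.eq_zero_or_pos n with h0 | h1
        · subst h0; exact base.symm
        · have := Fwd (n + P) n (by omega) h1 (ih h1)
          simpa [Nat.add_right_comm] using this
    refine ⟨P, hP1, ?_⟩
    intro n n' hn hn' hmod
    have hrr : r n = r n' := by
      have hper : ∀ m, 1 ≤ m → r (m + P) = r m := by
        intro m hm
        have := congrFun (fwd m hm) ⟨0, by omega⟩
        exact this
      exact per_ext r P 1 hper n n' hn hn' hmod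
    exact (ZMod.intCast_eq_intCast_iff _ _ _).mp hrr
  rcases lt_or_gt_of_ne (fun h => hne (by exact_mod_cast Fin.ext h)) with h | h
  · exact main i j (by exact_mod_cast h) (by simpa using heq)
  · exact main j i (by exact_mod_cast h) (by simpa using heq.symm)

/-- strict monotonicity on [1, ∞) from adjacent steps -/
lemma mono_of_adj (R : ℕ → ℤ) (hmono : ∀ n : ℕ, 1 ≤ n → R n < R (n + 1)) :
    ∀ n n', 1 ≤ n → n < n' → R n < R n' := by
  intro n n' hn hlt
  induction n' with
  | zero => omega
  | succ n' ih =>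
    rcases Nat.lt_or_ge n n' with h | h
    · exact lt_trans (ih h) (hmono n' (by omega))
    · have : n = n' := by omega
      subst this
      exact hmono n hn

lemma iterComp_pos : ∀ (M : ℕ) (R : Fin M → ℕ → ℤ),
    (∀ j n, 1 ≤ n → 0 < R j n) → ∀ k, 1 ≤ k → 1 ≤ iterComp M R k := by
  intro M
  induction M with
  | zero => intro R _ k hk; simp [iterComp]; exact_mod_cast hk
  | succ M ih =>
    intro R hpos k hk
    have hin : 1 ≤ iterComp M (fun j => R j.succ) k := ih _ (fun j n hn => hpos j.succ n hn) k hk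
    have : 1 ≤ (iterComp M (fun j => R j.succ) k).toNat := by omega
    exact hpos 0 _ this

lemma iterComp_mono : ∀ (M : ℕ) (R : Fin M → ℕ → ℤ),
    (∀ j n, 1 ≤ n → 0 < R j n) → (∀ j n, 1 ≤ n → R j n < R j (n + 1)) →
    ∀ k k', 1 ≤ k → k < k' → iterComp M R k < iterComp M R k' := by
  intro M
  induction M with
  | zero => intro R _ _ k k' hk hlt; simp [iterComp]; exact_mod_cast hlt
  | succ M ih =>
    intro R hpos hmono k k' hk hlt
    have hpos' : ∀ j n, 1 ≤ n → 0 < (fun j => R (Fin.succ j)) j n := fun j n hn => hpos j.succ n hn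
    have hin1 : 1 ≤ iterComp M (fun j => R j.succ) k := iterComp_pos M _ hpos' k hk
    have hin2 : iterComp M (fun j => R j.succ) k < iterComp M (fun j => R j.succ) k' :=
      ih _ hpos' (fun j n hn => hmono j.succ n hn) k k' hk hlt
    show R 0 _ < R 0 _
    apply mono_of_adj (R 0) (fun n hn => hmono 0 n hn)
    · omega
    · omega

/-- growth: iterComp M R k ≥ k -/
lemma iterComp_ge : ∀ (M : ℕ) (R : Fin M → ℕ → ℤ),
    (∀ j n, 1 ≤ n → 0 < R j n) → (∀ j n, 1 ≤ n → R j n < R j (n + 1)) →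
    ∀ k : ℕ, 1 ≤ k → (k : ℤ) ≤ iterComp M R k := by
  intro M R hpos hmono k hk
  induction k with
  | zero => omega
  | succ k ih =>
    rcases Nat.eq_zero_or_pos k with h0 | h1
    · subst h0
      simpa using iterComp_pos M R hpos 1 le_rfl
    · have h2 := iterComp_mono M R hpos hmono k (k+1) h1 (by omega)
      have := ih h1
      push_cast
      omega

/-- periodicity of composition modulo T -/
lemma iterComp_periodic : ∀ (M : ℕ) (R : Fin M → ℕ → ℤ) (d : Fin M → ℕ),
    (∀ j, IsRevILRS (R j) (d j)) → (∀ j n, 1 ≤ n → 0 < R j n) →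
    ∀ T, 1 ≤ T → ∃ P, 1 ≤ P ∧ ∀ k k', 1 ≤ k → 1 ≤ k' → k ≡ k' [MOD P] →
      iterComp M R k ≡ iterComp M R k' [ZMOD (T:ℕ)] := by
  intro M
  induction M with
  | zero =>
    intro R d _ _ T hT
    refine ⟨T, hT, ?_⟩
    intro k k' _ _ hmod
    exact natModEq_intModEq hmod
  | succ M ih =>
    intro R d hrev hpos T hT
    obtain ⟨PA, hPA1, hPA⟩ := revILRS_periodic (R 0) (d 0) (hrev 0) T hT
    obtain ⟨P, hP1, hP⟩ := ih (fun j => R j.succ) (fun j => d j.succ)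
      (fun j => hrev j.succ) (fun j n hn => hpos j.succ n hn) PA hPA1
    refine ⟨P, hP1, ?_⟩
    intro k k' hk hk' hmod
    have hpos' : ∀ j n, 1 ≤ n → 0 < (fun j => R (Fin.succ j)) j n := fun j n hn => hpos j.succ n hn
    have h1 : 1 ≤ iterComp M (fun j => R j.succ) k := iterComp_pos M _ hpos' k hk
    have h2 : 1 ≤ iterComp M (fun j => R j.succ) k' := iterComp_pos M _ hpos' k' hk'
    have hcong := hP k k' hk hk' hmod
    have hnat : (iterComp M (fun j => R j.succ) k).toNat ≡
        (iterComp M (fun j => R j.succ) k').toNat [MOD PA] :=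
      intModEq_natModEq (by omega) (by omega) hcong
    exact hPA _ _ (by omega) (by omega) hnat

section
variable {q : ℕ} [Fact (Nat.Prime q)]

/-- companion map -/
noncomputable def compMap (D : ℕ) (c : ℕ → ℤ) : (Fin D → ZMod q) →ₗ[ZMod q] (Fin D → ZMod q) where
  toFun v i := if h : (i:ℕ)+1 < D then v ⟨(i:ℕ)+1, h⟩ else ∑ k : Fin D, ((c (k:ℕ) : ℤ) : ZMod q) * v k
  map_add' v w := by
    funext i
    by_cases h : (i:ℕ)+1 < D <;> simp [h, Finset.sum_add_distrib, mul_add]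
  map_smul' m v := by
    funext i
    by_cases h : (i:ℕ)+1 < D <;> simp [h, Finset.mul_sum]
    · apply Finset.sum_congr rfl; intro k _; ring

end

lemma rec_periodic (t : ℕ → ℤ) (D : ℕ) (hD : 1 ≤ D) (c : ℕ → ℤ)
    (hrec : ∀ N, t (N + D) = ∑ i ∈ Finset.range D, c i * t (N + i))
    (q : ℕ) (hq : Nat.Prime q) :
    ∃ P, 1 ≤ P ∧ ∀ N N', D ≤ N → D ≤ N' → N ≡ N' [MOD P] → t N ≡ t N' [ZMOD (q:ℕ)] := by
  haveI : Fact (Nat.Prime q) := ⟨hq⟩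
  classical
  set f : (Fin D → ZMod q) →ₗ[ZMod q] (Fin D → ZMod q) := compMap D c with hf
  set u : ℕ → (Fin D → ZMod q) := fun N i => ((t (N + (i:ℕ)) : ℤ) : ZMod q) with hu
  have hstep : ∀ N, u (N + 1) = f (u N) := by
    intro N
    funext i
    rcases i with ⟨iv, hiv⟩
    show ((t (N + 1 + iv) : ℤ) : ZMod q) = _
    simp only [hf, compMap, LinearMap.coe_mk, AddHom.coe_mk]
    by_cases h : iv + 1 < D
    · simp only [h, dif_pos]
      show _ = ((t (N + (iv+1)) : ℤ) : ZMod q)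
      congr 2
      omega
    · simp only [h, dif_neg, not_false_iff]
      have he : N + 1 + iv = N + D := by omega
      rw [he, hrec N]
      push_cast
      rw [Fin.sum_univ_eq_sum_range (fun k => ((c k : ℤ) : ZMod q) * ((t (N + k) : ℤ) : ZMod q)) D]
  have hiter : ∀ N, u N = (f ^ N) (u 0) := by
    intro N
    induction N with
    | zero => simp
    | succ N ih => rw [hstep, ih, ← Module.End.mul_apply, ← pow_succ']
  obtain ⟨i, j, hne, heq⟩ := Fintype.exists_ne_map_eq_of_card_lt
    (fun i : Fin (Fintype.card (Fin D → ZMod q) + 1) => u i) (by simp)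
  have main : ∀ (i j : ℕ), i < j → u i = u j →
      ∃ P, 1 ≤ P ∧ ∀ N N', D ≤ N → D ≤ N' → N ≡ N' [MOD P] → t N ≡ t N' [ZMOD (q:ℕ)] := by
    intro i j hij hequ
    set P := j - i with hP
    have hP1 : 1 ≤ P := by omega
    set v : Fin D → ZMod q := u P - u 0 with hv
    have hdiff : ∀ N, u (N + P) - u N = (f ^ N) v := by
      intro N
      rw [hv, map_sub, hiter P, hiter 0, ← Module.End.mul_apply, ← Module.End.mul_apply,
        ← pow_add, pow_zero]
      rw [hiter (N + P), hiter N]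
      simp [add_comm]
    have hvi : (f ^ i) v = 0 := by
      have := hdiff i
      have e : i + P = j := by omega
      rw [e, hequ] at this
      simp at this
      rw [← this]
    have hvD : (f ^ D) v = 0 := by
      have hker : v ∈ LinearMap.ker (f ^ i) := hvi
      have hle := Module.End.ker_pow_le_ker_pow_finrank f i
      have hfr : Module.finrank (ZMod q) (Fin D → ZMod q) = D := by
        simp [Module.finrank_pi]
      rw [hfr] at hle
      exact hle hker
    have hper : ∀ N, D ≤ N → u (N + P) = u N := by
      intro N hN
      have : (f ^ N) v = 0 := by
        have e : N = (N - D) + D := by omega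
        rw [e, pow_add, Module.End.mul_apply, hvD, map_zero]
      have := hdiff N
      rw [‹(f ^ N) v = 0›] at this
      have h2 := sub_eq_zero.mp this
      exact h2
    refine ⟨P, hP1, ?_⟩
    intro N N' hN hN' hmod
    have := per_ext u P D hper N N' hN hN' hmod
    have h0 := congrFun this ⟨0, by omega⟩
    simp only [hu, add_zero] at h0
    exact (ZMod.intCast_eq_intCast_iff _ _ _).mp (by simpa using h0)
  rcases lt_or_gt_of_ne (fun h => hne (by exact_mod_cast Fin.ext h)) with h | h
  · exact main i j (by exact_mod_cast h) (by simpa using heq)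
  · exact main j i (by exact_mod_cast h) (by simpa using heq.symm)

open IntermediateField in
lemma key_t (α : ℝ) (h1 : 1 < α) (hint : IsIntegral ℤ α)
    (hconj : ∀ z : ℂ, Polynomial.aeval z (minpoly ℤ α) = 0 → z ≠ (α:ℂ) → ‖z‖ ≤ 1) :
    ∃ (t : ℕ → ℤ) (C D : ℕ) (c : ℕ → ℤ), 1 ≤ D ∧
      (∀ N : ℕ, |α ^ N - (t N : ℝ)| ≤ (C:ℝ)) ∧
      (∀ N : ℕ, t (N + D) = ∑ i ∈ Finset.range D, c i * t (N + i)) := by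
  classical
  have hintQ : IsIntegral ℚ α := hint.tower_top
  set K := ℚ⟮α⟯ with hK
  haveI : FiniteDimensional ℚ K := IntermediateField.adjoin.finiteDimensional hintQ
  set g : K := IntermediateField.AdjoinSimple.gen ℚ α with hgdef
  have hg : algebraMap K ℝ g = α := IntermediateField.AdjoinSimple.algebraMap_gen ℚ α
  have hinj : Function.Injective (algebraMap K ℝ) := (algebraMap K ℝ).injective
  have hgint : IsIntegral ℤ g := by
    rw [← isIntegral_algebraMap_iff hinj, hg]; exact hint
  have hming : minpoly ℤ α = minpoly ℤ g := by
    rw [← hg, minpoly.algebraMap_eq hinj]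
  -- the trace sequence
  have htr : ∀ N : ℕ, ∃ y : ℤ, algebraMap ℤ ℚ y = Algebra.trace ℚ K (g ^ N) := by
    intro N
    exact IsIntegrallyClosed.isIntegral_iff.mp (Algebra.isIntegral_trace (hgint.pow N))
  choose t ht using htr
  -- embeddings
  have hembsum : ∀ N : ℕ, ((t N : ℚ) : ℂ) = ∑ σ : K →ₐ[ℚ] ℂ, (σ g) ^ N := by
    intro N
    have h2 : algebraMap ℚ ℂ (Algebra.trace ℚ K (g ^ N)) = ∑ σ : K →ₐ[ℚ] ℂ, σ (g ^ N) :=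
      trace_eq_sum_embeddings (E := ℂ)
    rw [← ht N] at h2
    have h3 : algebraMap ℚ ℂ (algebraMap ℤ ℚ (t N)) = ((t N : ℚ) : ℂ) := by
      push_cast; norm_cast
    rw [h3] at h2
    simpa [map_pow] using h2
  set σ₀ : K →ₐ[ℚ] ℂ := (Complex.ofRealAm.restrictScalars ℚ).comp (IntermediateField.val K) with hσ₀
  have hσ₀g : σ₀ g = (α : ℂ) := by
    simp only [hσ₀, AlgHom.comp_apply, AlgHom.coe_restrictScalars]
    show ((algebraMap K ℝ g : ℝ) : ℂ) = _
    rw [hg]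
  have hroot : ∀ σ : K →ₐ[ℚ] ℂ, Polynomial.aeval (σ g) (minpoly ℤ α) = 0 := by
    intro σ
    rw [hming]
    have := Polynomial.aeval_algHom_apply (σ.restrictScalars ℤ) g (minpoly ℤ g)
    rw [minpoly.aeval] at this
    simpa using this
  have hdist : ∀ σ : K →ₐ[ℚ] ℂ, σ ≠ σ₀ → σ g ≠ (α : ℂ) := by
    intro σ hσ hcon
    apply hσ
    have pb := IntermediateField.adjoin.powerBasis hintQ
    apply PowerBasis.algHom_ext (IntermediateField.adjoin.powerBasis hintQ)
    rw [IntermediateField.adjoin.powerBasis_gen]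
    exact hcon.trans hσ₀g.symm
  have habs : ∀ σ : K →ₐ[ℚ] ℂ, σ ≠ σ₀ → ‖σ g‖ ≤ 1 :=
    fun σ hσ => hconj _ (hroot σ) (hdist σ hσ)
  set C : ℕ := Fintype.card (K →ₐ[ℚ] ℂ) - 1 with hC
  -- approximation
  have happrox : ∀ N : ℕ, |α ^ N - (t N : ℝ)| ≤ (C : ℝ) := by
    intro N
    have hsplit : ((t N : ℚ) : ℂ) = (σ₀ g) ^ N + ∑ σ ∈ Finset.univ.erase σ₀, (σ g) ^ N := by
      rw [hembsum N, ← Finset.add_sum_erase _ _ (Finset.mem_univ σ₀)]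
    rw [hσ₀g] at hsplit
    have hdiffC : ((t N : ℝ) : ℂ) - ((α : ℝ) : ℂ) ^ N = ∑ σ ∈ Finset.univ.erase σ₀, (σ g) ^ N := by
      have : ((t N : ℝ) : ℂ) = ((t N : ℚ) : ℂ) := by push_cast; ring
      rw [this, hsplit]; ring
    have hbound : ‖((t N : ℝ) : ℂ) - ((α : ℝ) : ℂ) ^ N‖ ≤ (C : ℝ) := by
      rw [hdiffC]
      calc ‖∑ σ ∈ Finset.univ.erase σ₀, (σ g) ^ N‖
          ≤ ∑ σ ∈ Finset.univ.erase σ₀, ‖(σ g) ^ N‖ :=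
            norm_sum_le _ _
        _ ≤ ∑ _σ ∈ Finset.univ.erase σ₀, (1:ℝ) := by
            apply Finset.sum_le_sum
            intro σ hσ
            rw [norm_pow]
            exact pow_le_one₀ (norm_nonneg _) (habs σ (Finset.ne_of_mem_erase hσ))
        _ = ((Finset.univ.erase σ₀).card : ℝ) := by
            rw [Finset.sum_const, nsmul_eq_mul, mul_one]
        _ = (C : ℝ) := by
            rw [Finset.card_erase_of_mem (Finset.mem_univ σ₀), Finset.card_univ]
    have : |α ^ N - (t N : ℝ)| = ‖(((α ^ N - (t N : ℝ) : ℝ)) : ℂ)‖ := by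
      rw [Complex.norm_real, Real.norm_eq_abs]
    rw [this]
    have he : (((α ^ N - (t N : ℝ) : ℝ)) : ℂ) = -((((t N : ℝ)) : ℂ) - ((α:ℝ):ℂ) ^ N) := by
      push_cast; ring
    rw [he, norm_neg]
    exact hbound
  -- recurrence
  set p := minpoly ℤ α with hp
  set D := p.natDegree with hD
  have hD1 : 1 ≤ D := minpoly.natDegree_pos hint
  have hmonic : p.Monic := minpoly.monic hint
  have hkey : ∀ N : ℕ, ∑ i ∈ Finset.range (D + 1), p.coeff i * t (N + i) = 0 := by
    intro N
    have hcast : ((∑ i ∈ Finset.range (D + 1), p.coeff i * t (N + i) : ℤ) : ℂ) = 0 := by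
      push_cast
      have hterm : ∀ i : ℕ, ((t (N + i) : ℚ) : ℂ) = ∑ σ : K →ₐ[ℚ] ℂ, (σ g) ^ (N + i) :=
        fun i => hembsum (N + i)
      calc ∑ i ∈ Finset.range (D + 1), (p.coeff i : ℂ) * ((t (N + i) : ℤ) : ℂ)
          = ∑ i ∈ Finset.range (D + 1), (p.coeff i : ℂ) * ∑ σ : K →ₐ[ℚ] ℂ, (σ g) ^ (N + i) := by
            apply Finset.sum_congr rfl
            intro i _
            congr 1
            rw [show ((t (N+i) : ℤ) : ℂ) = ((t (N+i) : ℚ) : ℂ) by push_cast; ring, hterm i]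
        _ = ∑ σ : K →ₐ[ℚ] ℂ, ∑ i ∈ Finset.range (D + 1), (p.coeff i : ℂ) * (σ g) ^ (N + i) := by
            rw [Finset.sum_comm]
            simp [Finset.mul_sum]
        _ = ∑ σ : K →ₐ[ℚ] ℂ, (σ g) ^ N * (Polynomial.aeval (σ g) p) := by
            apply Finset.sum_congr rfl
            intro σ _
            rw [Polynomial.aeval_eq_sum_range (p := p) (σ g)]
            rw [← hD, Finset.mul_sum]
            apply Finset.sum_congr rfl
            intro i _
            rw [zsmul_eq_mul]
            ring
        _ = 0 := by
            apply Finset.sum_eq_zero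
            intro σ _
            rw [hroot σ, mul_zero]
    exact_mod_cast hcast
  refine ⟨t, C, D, fun i => -(p.coeff i), hD1, happrox, ?_⟩
  intro N
  have h2 := hkey N
  rw [Finset.sum_range_succ] at h2
  have hcD : p.coeff D = 1 := hmonic.coeff_natDegree
  rw [hcD, one_mul] at h2
  have : t (N + D) = -∑ i ∈ Finset.range D, p.coeff i * t (N + i) := by omega
  rw [this, ← Finset.sum_neg_distrib]
  apply Finset.sum_congr rfl
  intro i _
  ring

end Auxiliary

set_option maxHeartbeats 1000000 in
theorem stmt3 (M : ℕ) (hM : 1 ≤ M) (d : Fin M → ℕ) (R : Fin M → ℕ → ℤ)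
    (hrev : ∀ j, IsRevILRS (R j) (d j))
    (hpos : ∀ j, ∀ n : ℕ, 1 ≤ n → 0 < R j n)
    (hmono : ∀ j, ∀ n : ℕ, 1 ≤ n → R j n < R j (n + 1))
    (α : ℝ) (hα : IsPisot α ∨ IsSalem α)
    (H : ℕ) (hH : 1 ≤ H) :
    ∃ m0 : ℕ, 1 ≤ m0 ∧ ∀ m : ℕ, m0 ≤ m → ∃ L : ℕ, 1 ≤ L ∧
      ∀ h : ℤ, |h| ≤ (H : ℤ) → ∀ n : ℕ, 1 ≤ n →
        IsCompositeInt (⌊α ^ (iterComp M R (L * n + m))⌋ + h) := by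
  classical
  -- Unify Pisot/Salem: all conjugates other than α have modulus ≤ 1
  obtain ⟨hα1, hαint, hconj⟩ :
      (1 < α) ∧ IsIntegral ℤ α ∧
        (∀ z : ℂ, Polynomial.aeval z (minpoly ℤ α) = 0 → z ≠ (α : ℂ) → ‖z‖ ≤ 1) := by
    rcases hα with hp | hs
    · exact ⟨hp.1, hp.2.1, fun z hz hne => le_of_lt (hp.2.2 z hz hne)⟩
    · refine ⟨hs.1, hs.2.1, fun z hz hne => ?_⟩
      by_cases hz2 : z = ((α : ℂ))⁻¹
      · subst hz2
        rw [norm_inv, Complex.norm_real, Real.norm_eq_abs, abs_of_pos (by linarith [hs.1])]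
        rw [inv_le_one₀ (by linarith [hs.1])]
        linarith [hs.1]
      · exact le_of_eq (hs.2.2.2.2 z hz hne hz2)
  obtain ⟨t, C, D, c, hD1, happrox, hrec⟩ := key_t α hα1 hαint hconj
  -- the composed exponent sequence, as naturals
  set E : ℕ → ℕ := fun k => (iterComp M R k).toNat with hE
  have hpos' : ∀ j n, 1 ≤ n → 0 < R j n := hpos
  have hmono' : ∀ j n, 1 ≤ n → R j n < R j (n + 1) := hmono
  have hIpos : ∀ k, 1 ≤ k → 1 ≤ iterComp M R k := iterComp_pos M R hpos'
  have hEcast : ∀ k, 1 ≤ k → ((E k : ℕ) : ℤ) = iterComp M R k := by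
    intro k hk
    exact Int.toNat_of_nonneg (by linarith [hIpos k hk])
  have hE1 : ∀ k, 1 ≤ k → 1 ≤ E k := by
    intro k hk
    have := hIpos k hk
    simp only [hE]
    omega
  have hEge : ∀ k, 1 ≤ k → k ≤ E k := by
    intro k hk
    have h2 := iterComp_ge M R hpos' hmono' k hk
    simp only [hE]
    omega
  have hIstep : ∀ (k s : ℕ), 1 ≤ k → iterComp M R k + s ≤ iterComp M R (k + s) := by
    intro k s hk
    induction s with
    | zero => simp
    | succ s ih =>
      have h2 : iterComp M R (k + s) < iterComp M R (k + s + 1) :=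
        iterComp_mono M R hpos' hmono' (k + s) (k + s + 1) (by omega) (by omega)
      have e1 : k + (s + 1) = k + s + 1 := by omega
      rw [e1]
      push_cast
      push_cast at ih
      omega
  have hEadd : ∀ (k s : ℕ), 1 ≤ k → E k + s ≤ E (k + s) := by
    intro k s hk
    have h2 := hIstep k s hk
    have h0 := hIpos k hk
    simp only [hE]
    omega
  -- choose m0
  obtain ⟨m1, hm1⟩ := pow_unbounded_of_one_lt (((2*C + H + 2 : ℕ) : ℝ)) hα1
  refine ⟨max (max D 1) m1, le_trans (by omega) (le_max_left _ _), ?_⟩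
  intro m hm
  have hm1le : m1 ≤ m := le_trans (le_max_right _ _) hm
  have hmD : D ≤ m := le_trans (le_trans (le_max_left _ _) (le_max_left _ _)) hm
  have hmpos : 1 ≤ m := le_trans (le_trans (le_max_right _ _) (le_max_left _ _)) hm
  set N₀ := E m with hN₀
  have hN₀m : m ≤ N₀ := hEge m hmpos
  have hα1' : (1:ℝ) ≤ α := le_of_lt hα1
  have hpowN₀ : ((2*C + H + 2 : ℕ) : ℝ) < α ^ N₀ :=
    lt_of_lt_of_le hm1 (pow_le_pow_right₀ hα1' (le_trans hm1le hN₀m))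
  have ht0lb : α ^ N₀ - C ≤ ((t N₀ : ℤ) : ℝ) := by
    have := abs_le.mp (happrox N₀)
    linarith [this.2]
  have ht0ub : ((t N₀ : ℤ) : ℝ) ≤ α ^ N₀ + C := by
    have := abs_le.mp (happrox N₀)
    linarith [this.1]
  -- the window/shift set and choice of primes and periods
  set S : Finset (ℤ × ℤ) := (Finset.Icc (-(C:ℤ)) C) ×ˢ (Finset.Icc (-(H:ℤ)) H) with hS
  have hchoice : ∀ w : ℤ × ℤ, ∃ x : ℕ × ℕ, w ∈ S →
      (Nat.Prime x.1 ∧ ((x.1 : ℤ) ∣ (t N₀ - w.1 + w.2)) ∧ ((x.1 : ℤ) ≤ t N₀ - w.1 + w.2) ∧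
        1 ≤ x.2 ∧ (∀ N N', D ≤ N → D ≤ N' → N ≡ N' [MOD x.2] → t N ≡ t N' [ZMOD (x.1 : ℕ)])) := by
    intro w
    by_cases hw : w ∈ S
    · rw [hS, Finset.mem_product, Finset.mem_Icc, Finset.mem_Icc] at hw
      set v : ℤ := t N₀ - w.1 + w.2 with hv
      have hv2 : 2 ≤ v := by
        have hr : (2 : ℝ) < ((t N₀ : ℤ) : ℝ) - ((w.1 : ℤ) : ℝ) + ((w.2 : ℤ) : ℝ) := by
          have hCw : ((w.1 : ℤ) : ℝ) ≤ (C : ℝ) := by exact_mod_cast hw.1.2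
          have hHw : (-(H:ℝ)) ≤ ((w.2 : ℤ) : ℝ) := by exact_mod_cast hw.2.1
          push_cast at hpowN₀
          linarith [ht0lb]
        have hr2 : (2 : ℤ) < t N₀ - w.1 + w.2 := by exact_mod_cast hr
        omega
      obtain ⟨q, hqprime, hqdvd⟩ := Nat.exists_prime_and_dvd (n := v.toNat) (by omega)
      have hvq : (q : ℤ) ∣ v := by
        have : ((v.toNat : ℕ) : ℤ) = v := Int.toNat_of_nonneg (by omega)
        rw [← this]
        exact_mod_cast hqdvd
      have hqle : (q : ℤ) ≤ v := by
        have := Nat.le_of_dvd (by omega) hqdvd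
        omega
      obtain ⟨P, hP1, hPspec⟩ := rec_periodic t D hD1 c hrec q hqprime
      exact ⟨(q, P), fun _ => ⟨hqprime, hvq, hqle, hP1, hPspec⟩⟩
    · exact ⟨(2, 1), fun h => absurd h hw⟩
  choose F hF using hchoice
  set T : ℕ := ∏ w ∈ S, (F w).2 with hT
  have hT1 : 1 ≤ T := Finset.one_le_prod' (fun w hw => (hF w hw).2.2.2.1)
  obtain ⟨P, hP1, hPer⟩ := iterComp_periodic M R d hrev hpos' T hT1
  -- choose the factor making L large
  have hαP : (1:ℝ) < α ^ P := one_lt_pow₀ hα1 (by omega)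
  obtain ⟨gg, hgg⟩ := pow_unbounded_of_one_lt (((2*C + 2*H + 3 : ℕ) : ℝ)) hαP
  set L : ℕ := P * (gg + 1) with hL
  have hL1 : 1 ≤ L := by simp only [hL]; exact Nat.mul_pos (by omega) (by omega)
  have hαL : ((2*C + 2*H + 3 : ℕ) : ℝ) < α ^ L := by
    calc ((2*C + 2*H + 3 : ℕ) : ℝ) < (α ^ P) ^ gg := hgg
      _ ≤ (α ^ P) ^ (gg + 1) := pow_le_pow_right₀ (le_of_lt hαP) (by omega)
      _ = α ^ L := by rw [← pow_mul]
  refine ⟨L, hL1, ?_⟩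
  intro h hh n hn
  set k : ℕ := L * n + m with hk
  have hk1 : 1 ≤ k := by omega
  have hkm : m ≤ k := by omega
  have hkmod : k ≡ m [MOD P] := by
    have hdk : k - m = P * ((gg + 1) * n) := by rw [hk, hL]; ring_nf; omega
    have : m ≡ k [MOD P] := (Nat.modEq_iff_dvd' hkm).mpr ⟨(gg + 1) * n, hdk⟩
    exact this.symm
  set N := E k with hN
  have hND : D ≤ N := le_trans hmD (le_trans hkm (hEge k hk1))
  have hN₀D : D ≤ N₀ := le_trans hmD hN₀m
  have hNge : N₀ + L ≤ N := by
    have h2 := hEadd m (L * n) hmpos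
    have h3 : m + L * n = k := by omega
    rw [h3] at h2
    have : L ≤ L * n := Nat.le_mul_of_pos_right L (show 0 < n by omega)
    omega
  -- rewrite the zpow as a pow
  have hconv : α ^ (iterComp M R (L * n + m)) = α ^ (N : ℕ) := by
    rw [show iterComp M R (L * n + m) = ((N : ℕ) : ℤ) from (hEcast k hk1).symm, zpow_natCast]
  rw [hconv]
  set F₀ : ℤ := ⌊α ^ (N : ℕ)⌋ with hF₀
  have hfl1 : (F₀ : ℝ) ≤ α ^ N := Int.floor_le _
  have hfl2 : α ^ N < (F₀ : ℝ) + 1 := by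
    have := Int.lt_floor_add_one (α ^ N)
    exact_mod_cast this
  have happN := abs_le.mp (happrox N)
  set cc : ℤ := t N - F₀ with hcc
  have hccC : -(C:ℤ) ≤ cc ∧ cc ≤ (C:ℤ) := by
    constructor
    · -- F₀ ≤ t N + C
      have hr : (F₀ : ℝ) ≤ ((t N : ℤ) : ℝ) + C := by linarith [happN.1]
      have : F₀ ≤ t N + C := by exact_mod_cast hr
      omega
    · -- t N - C ≤ F₀ : from t N - C ≤ α^N < F₀ + 1
      have hr : ((t N : ℤ) : ℝ) - C < (F₀ : ℝ) + 1 := by linarith [happN.2]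
      have : (t N : ℤ) - C < F₀ + 1 := by exact_mod_cast hr
      omega
  have hwmem : ((cc, h) : ℤ × ℤ) ∈ S := by
    rw [hS, Finset.mem_product, Finset.mem_Icc, Finset.mem_Icc]
    have := abs_le.mp hh
    exact ⟨⟨hccC.1, hccC.2⟩, this⟩
  obtain ⟨hqprime, hqdvd, hqle, hTq1, hTqspec⟩ := hF (cc, h) hwmem
  set q : ℕ := (F (cc, h)).1 with hq
  set Tq : ℕ := (F (cc, h)).2 with hTqdef
  -- congruence of exponents mod T, hence mod Tq
  have hEcong : N ≡ N₀ [MOD T] := by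
    have hcong := hPer k m hk1 hmpos hkmod
    exact intModEq_natModEq (by have := hIpos k hk1; omega) (by have := hIpos m hmpos; omega) hcong
  have hEcongq : N ≡ N₀ [MOD Tq] := hEcong.of_dvd (Finset.dvd_prod_of_mem _ hwmem)
  have htcong : t N ≡ t N₀ [ZMOD (q : ℕ)] := hTqspec N N₀ hND hN₀D hEcongq
  -- divisibility
  have hdvd : (q : ℤ) ∣ F₀ + h := by
    have h2 : (q : ℤ) ∣ t N₀ - cc + h := hqdvd
    have h3 : ((q : ℕ) : ℤ) ∣ t N₀ - t N := htcong.dvd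
    have h4 : F₀ + h = (t N₀ - cc + h) - (t N₀ - t N) := by rw [hcc]; ring
    rw [h4]
    exact dvd_sub h2 h3
  -- size
  have hq2 : 2 ≤ q := hqprime.two_le
  have hsize : (q : ℤ) < F₀ + h := by
    have hr1 : ((q : ℕ) : ℝ) ≤ α ^ N₀ + 2*C + H := by
      have h2 : ((q:ℤ) : ℝ) ≤ ((t N₀ - cc + h : ℤ) : ℝ) := by exact_mod_cast hqle
      push_cast at h2 ⊢
      have hcR : ((cc : ℤ) : ℝ) ≥ -(C : ℝ) := by exact_mod_cast hccC.1
      have hhR : ((h : ℤ) : ℝ) ≤ (H : ℝ) := by exact_mod_cast (abs_le.mp hh).2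
      linarith [ht0ub]
    have hNpow : α ^ N₀ * ((2*C + 2*H + 3 : ℕ) : ℝ) < α ^ N := by
      calc α ^ N₀ * ((2*C + 2*H + 3 : ℕ) : ℝ) < α ^ N₀ * α ^ L := by
            apply mul_lt_mul_of_pos_left hαL (by positivity)
        _ = α ^ (N₀ + L) := by rw [pow_add]
        _ ≤ α ^ N := pow_le_pow_right₀ hα1' hNge
    have hpow1 : (1:ℝ) ≤ α ^ N₀ := one_le_pow₀ hα1'
    have hr2 : ((q : ℕ) : ℝ) + 1 + H < α ^ N := by
      have hexp : α ^ N₀ * ((2*C + 2*H + 3 : ℕ) : ℝ) ≥ α ^ N₀ + (2*C + 2*H + 2 : ℝ) := by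
        push_cast
        nlinarith [hpow1]
      linarith
    have hr3 : ((q : ℕ) : ℝ) < (F₀ : ℝ) + h := by
      have hhR : -(H : ℝ) ≤ ((h : ℤ) : ℝ) := by exact_mod_cast (abs_le.mp hh).1
      linarith
    exact_mod_cast hr3
  constructor
  · omega
  · intro hPrime
    have hpos0 : 0 < F₀ + h := by omega
    have hnatp : Nat.Prime (F₀ + h).natAbs := Int.prime_iff_natAbs_prime.mp hPrime
    have hqdvdn : q ∣ (F₀ + h).natAbs := by
      have : ((q:ℕ):ℤ) ∣ F₀ + h := hdvd
      have h5 : ((q:ℤ)).natAbs ∣ (F₀ + h).natAbs := Int.natAbs_dvd_natAbs.mpr this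
      simpa using h5
    rcases (Nat.Prime.eq_one_or_self_of_dvd hnatp q hqdvdn) with h1 | h1
    · omega
    · have : ((F₀ + h).natAbs : ℤ) = F₀ + h := Int.natAbs_of_nonneg (by omega)
      omega
end

section
/- Let α be a Pisot or Salem number and let (F(n))_{n≥1} be the Fibonacci sequence with F(1) = F(2) = 1. Then the numbers ⌊α^{F(F(n))}⌋ are composite for infinitely many integers n ≥ 1. -/
open Filter Polynomial

open IntermediateField in
set_option maxHeartbeats 1000000 in
lemma alg_core (α : ℝ) (hα : IsPisot α ∨ IsSalem α) :
    ∃ (d : ℕ) (c : ℕ → ℤ) (t : ℕ → ℤ) (C : ℤ),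
      1 ≤ d ∧ c 0 ≠ 0 ∧ 0 ≤ C ∧
      (∀ m, t (m + d) = ∑ i ∈ Finset.range d, c i * t (m + i)) ∧
      (∀ m, |α ^ m - (t m : ℝ)| ≤ (C : ℝ)) := by
  obtain ⟨hgt, hint⟩ : 1 < α ∧ IsIntegral ℤ α := by
    rcases hα with h | h
    · exact ⟨h.1, h.2.1⟩
    · exact ⟨h.1, h.2.1⟩
  have hroot : ∀ z : ℂ, Polynomial.aeval z (minpoly ℤ α) = 0 → z ≠ (α : ℂ) →
      ‖z‖ ≤ 1 := by
    intro z hz hne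
    rcases hα with h | h
    · exact (h.2.2 z hz hne).le
    · rcases eq_or_ne z ((α : ℂ)⁻¹) with rfl | hne2
      · rw [norm_inv, inv_le_one_iff₀]
        right
        calc (1:ℝ) ≤ α := hgt.le
        _ = ‖(α:ℂ)‖ := by rw [Complex.norm_real, Real.norm_eq_abs, abs_of_pos (lt_trans one_pos hgt)]
      · exact (h.2.2.2.2 z hz hne hne2).le
  have hintQ : IsIntegral ℚ α := hint.tower_top
  set K := ℚ⟮α⟯ with hK
  haveI : FiniteDimensional ℚ K := IntermediateField.adjoin.finiteDimensional hintQ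
  set x : K := IntermediateField.AdjoinSimple.gen ℚ α with hx
  have hmapgen : (algebraMap K ℝ) x = α := IntermediateField.AdjoinSimple.algebraMap_gen ℚ α
  have hxint : IsIntegral ℤ x := by
    have h := isIntegral_algebraMap_iff (R := ℤ) (A := K) (B := ℝ) (x := x)
      (algebraMap K ℝ).injective
    rw [hmapgen] at h
    exact h.mp hint
  have hminEq : minpoly ℤ x = minpoly ℤ α := by
    conv_rhs => rw [← hmapgen]
    exact (minpoly.algebraMap_eq (algebraMap K ℝ).injective x).symm
  set P : Polynomial ℤ := minpoly ℤ α with hP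
  set d := P.natDegree with hd
  have hd1 : 1 ≤ d := minpoly.natDegree_pos hint
  set tq : ℕ → ℚ := fun m => Algebra.trace ℚ K (x ^ m) with htq
  have htqint : ∀ m, IsIntegral ℤ (tq m) := fun m =>
    Algebra.isIntegral_trace (hxint.pow m)
  choose t ht0 using fun m => IsIntegrallyClosed.isIntegral_iff.mp (htqint m)
  have ht : ∀ m, ((t m : ℚ)) = tq m := by
    intro m; rw [← ht0 m]; simp [algebraMap_int_eq]
  set c : ℕ → ℤ := fun i => -(P.coeff i) with hc
  have h0 : x ≠ 0 := by
    intro h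
    rw [h, map_zero] at hmapgen
    linarith [hmapgen]
  have hc0 : c 0 ≠ 0 := by
    have hQmin : minpoly ℚ x = (minpoly ℤ x).map (algebraMap ℤ ℚ) :=
      minpoly.isIntegrallyClosed_eq_field_fractions' ℚ hxint
    have hnz := minpoly.coeff_zero_ne_zero (hxint.tower_top (A := ℚ)) h0
    rw [hQmin, Polynomial.coeff_map, hminEq] at hnz
    simp only [hc, neg_ne_zero]
    intro hh
    rw [hh] at hnz
    simp at hnz
  have hmon : P.Monic := minpoly.monic hint
  have haev : Polynomial.aeval x P = 0 := by rw [← hminEq]; exact minpoly.aeval ℤ x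
  have hpow : ∀ m : ℕ, x ^ (m + d) = ∑ i ∈ Finset.range d, (c i) • x ^ (m + i) := by
    intro m
    have hexp := Polynomial.aeval_eq_sum_range (p := P) x
    rw [haev] at hexp
    rw [Finset.sum_range_succ, hmon.coeff_natDegree, one_smul] at hexp
    have hxd : x ^ d = ∑ i ∈ Finset.range d, (c i) • x ^ i := by
      rw [eq_neg_of_add_eq_zero_right hexp.symm]
      rw [← Finset.sum_neg_distrib]
      exact Finset.sum_congr rfl fun i _ => by simp [hc, neg_smul]
    calc x ^ (m + d) = x ^ m * x ^ d := by ring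
    _ = x ^ m * ∑ i ∈ Finset.range d, (c i) • x ^ i := by rw [hxd]
    _ = ∑ i ∈ Finset.range d, (c i) • x ^ (m + i) := by
        rw [Finset.mul_sum]
        exact Finset.sum_congr rfl fun i _ => by rw [mul_smul_comm, ← pow_add]
  -- integer recurrence
  have hrec : ∀ m, t (m + d) = ∑ i ∈ Finset.range d, c i * t (m + i) := by
    intro m
    have h1 : tq (m + d) = ∑ i ∈ Finset.range d, (c i : ℚ) * tq (m + i) := by
      simp only [htq]
      rw [hpow m, map_sum]
      exact Finset.sum_congr rfl fun i _ => by
        rw [map_zsmul]; simp [zsmul_eq_mul]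
    apply Int.cast_injective (α := ℚ)
    push_cast
    rw [ht (m+d), h1]
    exact Finset.sum_congr rfl fun i _ => by rw [ht (m+i)]
  -- embeddings
  haveI : Algebra.IsSeparable ℚ K := inferInstance
  have htrace : ∀ m, ((t m : ℂ)) = ∑ σ : K →ₐ[ℚ] ℂ, (σ x) ^ m := by
    intro m
    have h1 : (algebraMap ℚ ℂ) (tq m) = ∑ σ : K →ₐ[ℚ] ℂ, σ (x ^ m) :=
      trace_eq_sum_embeddings ℂ
    rw [← ht m] at h1
    calc ((t m : ℂ)) = (algebraMap ℚ ℂ) ((t m : ℚ)) := by push_cast; simp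
    _ = ∑ σ : K →ₐ[ℚ] ℂ, σ (x ^ m) := h1
    _ = ∑ σ : K →ₐ[ℚ] ℂ, (σ x) ^ m := Finset.sum_congr rfl fun σ _ => map_pow σ x m
  -- the distinguished embedding
  set σ₀ : K →ₐ[ℚ] ℂ := (Complex.ofRealAm.restrictScalars ℚ).comp K.val with hσ₀
  have hσ₀x : σ₀ x = (α : ℂ) := by
    simp only [hσ₀, AlgHom.comp_apply, AlgHom.coe_restrictScalars']
    change ((algebraMap K ℝ x : ℝ) : ℂ) = (α : ℂ)
    rw [hmapgen]
  -- every other embedding sends x to a root of P of modulus ≤ 1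
  have hother : ∀ σ : K →ₐ[ℚ] ℂ, σ ≠ σ₀ → ‖σ x‖ ≤ 1 := by
    intro σ hσ
    have hzero : Polynomial.aeval (σ x) P = 0 := by
      have := Polynomial.aeval_algHom_apply ((σ : K →+* ℂ).toIntAlgHom) x P
      rw [haev, map_zero] at this
      exact this
    apply hroot _ hzero
    intro heq
    apply hσ
    apply PowerBasis.algHom_ext (IntermediateField.adjoin.powerBasis hintQ)
    rw [IntermediateField.adjoin.powerBasis_gen]
    rw [show IntermediateField.AdjoinSimple.gen ℚ α = x from rfl]
    exact heq.trans hσ₀x.symm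
  -- the bound
  haveI : DecidableEq (K →ₐ[ℚ] ℂ) := Classical.decEq _
  set C : ℤ := (Fintype.card (K →ₐ[ℚ] ℂ) : ℤ) with hC
  refine ⟨d, c, t, C, hd1, hc0, by positivity, hrec, ?_⟩
  intro m
  have hsplit : ((α:ℂ))^m - (t m : ℂ) = -∑ σ ∈ Finset.univ.erase σ₀, (σ x) ^ m := by
    rw [htrace m, ← Finset.add_sum_erase _ _ (Finset.mem_univ σ₀), hσ₀x]
    ring
  have habs : ‖(α:ℂ)^m - (t m : ℂ)‖ ≤ (C : ℝ) := by
    rw [hsplit, norm_neg]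
    calc ‖∑ σ ∈ Finset.univ.erase σ₀, (σ x) ^ m‖
        ≤ ∑ σ ∈ Finset.univ.erase σ₀, ‖(σ x) ^ m‖ := by
          exact norm_sum_le _ _
    _ ≤ ∑ σ ∈ Finset.univ.erase σ₀, 1 := by
          apply Finset.sum_le_sum
          intro σ hσ
          rw [norm_pow]
          exact pow_le_one₀ (norm_nonneg _)
            (hother σ (Finset.ne_of_mem_erase hσ))
    _ ≤ (C : ℝ) := by
          rw [Finset.sum_const, nsmul_eq_mul, mul_one, hC]
          push_cast
          have := Finset.card_erase_le (a := σ₀) (s := (Finset.univ : Finset (K →ₐ[ℚ] ℂ)))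
          calc ((Finset.univ.erase σ₀).card : ℝ) ≤ (Finset.univ : Finset (K →ₐ[ℚ] ℂ)).card := by
                exact_mod_cast this
          _ = Fintype.card (K →ₐ[ℚ] ℂ) := by rw [Finset.card_univ]
  calc |α ^ m - (t m : ℝ)| = ‖(((α ^ m - (t m : ℝ) : ℝ)) : ℂ)‖ := by
        rw [Complex.norm_real, Real.norm_eq_abs]
  _ = ‖(α:ℂ)^m - (t m : ℂ)‖ := by push_cast; ring_nf
  _ ≤ (C : ℝ) := habs


lemma rec_periodic_s13 (d : ℕ) (hd : 1 ≤ d) (c : ℕ → ℤ) (t : ℕ → ℤ)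
    (hrec : ∀ m, t (m + d) = ∑ i ∈ Finset.range d, c i * t (m + i))
    (M : ℕ) (hM : M ≠ 0) (hunit : IsUnit ((c 0 : ZMod M))) :
    ∃ T, 1 ≤ T ∧ ∀ m, ((t (m + T) : ZMod M)) = ((t m : ZMod M)) := by
  haveI : NeZero M := ⟨hM⟩
  set S := (Fin d → ZMod M) with hS
  set step : S → S := fun v j =>
    if h : (j : ℕ) + 1 < d then v ⟨(j : ℕ) + 1, h⟩
    else ∑ i : Fin d, (c i : ZMod M) * v i with hstep
  set s : ℕ → S := fun m j => ((t (m + j) : ZMod M)) with hs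
  have hforward : ∀ m, s (m + 1) = step (s m) := by
    intro m
    funext j
    simp only [hs, hstep]
    split_ifs with h
    · show ((t (m + 1 + (j:ℕ)) : ZMod M)) = ((t (m + ((j:ℕ)+1)) : ZMod M))
      congr 2
      omega
    · have hmj : m + 1 + (j : ℕ) = m + d := by omega
      show ((t (m + 1 + (j:ℕ)) : ZMod M)) = _
      rw [hmj, hrec m]
      push_cast
      rw [Finset.sum_range fun i => (c i : ZMod M) * ((t (m + i) : ZMod M))]
  have hiter : ∀ m, s m = step^[m] (s 0) := by
    intro m
    induction m with
    | zero => rfl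
    | succ k ih => rw [Function.iterate_succ_apply', ← ih, hforward]
  have hinj : Function.Injective step := by
    intro v w hvw
    have hge1 : ∀ i : Fin d, 0 < (i : ℕ) → v i = w i := by
      intro i hi
      have hj : (i : ℕ) - 1 + 1 < d := by omega
      have := congr_fun hvw ⟨(i : ℕ) - 1, by omega⟩
      simp only [hstep] at this
      rw [dif_pos hj, dif_pos hj] at this
      convert this using 2 <;> · ext; simp; omega
    have i0 : Fin d := ⟨0, hd⟩
    funext j
    rcases Nat.eq_zero_or_pos (j : ℕ) with hj0 | hj0
    · have hlast := congr_fun hvw ⟨d - 1, by omega⟩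
      simp only [hstep] at hlast
      rw [dif_neg (by omega), dif_neg (by omega)] at hlast
      classical
      have h0mem : (⟨0, hd⟩ : Fin d) ∈ Finset.univ := Finset.mem_univ _
      rw [← Finset.add_sum_erase _ _ h0mem, ← Finset.add_sum_erase _ _ h0mem] at hlast
      have htail : ∑ i ∈ Finset.univ.erase (⟨0, hd⟩ : Fin d), (c i : ZMod M) * v i
          = ∑ i ∈ Finset.univ.erase (⟨0, hd⟩ : Fin d), (c i : ZMod M) * w i := by
        apply Finset.sum_congr rfl
        intro i hi
        have : (i : ℕ) ≠ 0 := by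
          intro h
          exact (Finset.ne_of_mem_erase hi) (by ext; simp [h])
        rw [hge1 i (Nat.pos_of_ne_zero this)]
      rw [htail] at hlast
      have hcancel := add_right_cancel hlast
      have hv0 : v ⟨0, hd⟩ = w ⟨0, hd⟩ := hunit.mul_left_cancel (by simpa using hcancel)
      have : j = (⟨0, hd⟩ : Fin d) := by ext; simpa using hj0
      rw [this]; exact hv0
    · exact hge1 j hj0
  haveI : Finite S := by
    haveI : Finite (ZMod M) := by
      rcases M with _ | M
      · exact absurd rfl hM
      · infer_instance
    exact Pi.finite
  obtain ⟨a, b, hab, heq⟩ := Finite.exists_ne_map_eq_of_infinite s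
  wlog hlt : a < b generalizing a b
  · exact this b a hab.symm heq.symm (by omega)
  set T := b - a with hT
  have hTpos : 1 ≤ T := by omega
  have hs0 : step^[T] (s 0) = s 0 := by
    have hb : s b = step^[T] (s a) := by
      rw [hiter b, hiter a, ← Function.iterate_add_apply]
      congr 1
      omega
    rw [← heq] at hb
    rw [hiter a] at hb
    have hb2 : step^[a] (s 0) = step^[a] (step^[T] (s 0)) := by
      rw [hb, ← Function.iterate_add_apply step T a, ← Function.iterate_add_apply step a T,
        Nat.add_comm]
    exact ((Function.Injective.iterate hinj a) hb2).symm
  have hper : ∀ m, s (m + T) = s m := by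
    intro m
    rw [hiter (m + T), hiter m, Function.iterate_add_apply, hs0]
  refine ⟨T, hTpos, fun m => ?_⟩
  have := congr_fun (hper m) ⟨0, hd⟩
  simpa [hs] using this


section FibSec
variable (F : ℕ → ℕ) (h1 : F 1 = 1) (h2 : F 2 = 1)
  (hrec : ∀ n : ℕ, 1 ≤ n → F (n + 2) = F (n + 1) + F n)

include h1 h2 hrec

lemma fib_my_pos : ∀ n, 1 ≤ n → 1 ≤ F n := by
  intro n
  induction n using Nat.strong_induction_on with
  | _ n ih =>
    intro hn
    match n, hn with
    | 1, _ => omega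
    | 2, _ => omega
    | (m + 3), _ =>
      have h := hrec (m+1) (by omega)
      simp only [show m+1+2 = m+3 from by omega, show m+1+1 = m+2 from by omega] at h
      have := ih (m + 2) (by omega) (by omega)
      omega

lemma fib_my_mono : ∀ a b, 1 ≤ a → a ≤ b → F a ≤ F b := by
  have step : ∀ n, 1 ≤ n → F n ≤ F (n + 1) := by
    intro n hn
    match n, hn with
    | 1, _ => show F 1 ≤ F 2; omega
    | (m + 2), _ =>
      show F (m+2) ≤ F (m+3)
      have h := hrec (m+1) (by omega)
      simp only [show m+1+2 = m+3 from by omega, show m+1+1 = m+2 from by omega] at h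
      omega
  intro a b ha hab
  induction b with
  | zero => omega
  | succ k ih =>
    rcases Nat.lt_or_ge a (k + 1) with h | h
    · exact le_trans (ih (by omega)) (step k (by omega))
    · have : a = k + 1 := by omega
      rw [this]

lemma fib_my_grow : ∀ n, 1 ≤ n → n ≤ 2 * F n := by
  intro n
  induction n using Nat.strong_induction_on with
  | _ n ih =>
    intro hn
    match n, hn with
    | 1, _ => omega
    | 2, _ => omega
    | (m + 3), _ =>
      have h := hrec (m+1) (by omega)
      simp only [show m+1+2 = m+3 from by omega, show m+1+1 = m+2 from by omega] at h
      have ha := ih (m + 2) (by omega) (by omega)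
      have hb := ih (m + 1) (by omega) (by omega)
      omega

lemma fib_my_period (M : ℕ) (hM : M ≠ 0) :
    ∃ T, 1 ≤ T ∧ ∀ n, 1 ≤ n → ((F (n + T) : ZMod M)) = ((F n : ZMod M)) := by
  set t : ℕ → ℤ := fun m => (F (m + 1) : ℤ) with ht
  have hrec2 : ∀ m, t (m + 2) = ∑ i ∈ Finset.range 2, (fun _ => (1:ℤ)) i * t (m + i) := by
    intro m
    have h := hrec (m+1) (by omega)
    simp only [ht, Finset.sum_range_succ, Finset.sum_range_one, one_mul]
    rw [show m + 2 + 1 = (m+1) + 2 from by omega, h,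
      show m + 1 + 1 = (m+1) + 1 from by omega]
    push_cast
    ring
  obtain ⟨T, hT1, hT⟩ := rec_periodic_s13 2 (by omega) _ t hrec2 M hM (by simp)
  refine ⟨T, hT1, fun n hn => ?_⟩
  have := hT (n - 1)
  have hn1 : n - 1 + 1 = n := by omega
  have hn2 : n - 1 + T + 1 = n + T := by omega
  simp only [ht, hn2, hn1] at this
  exact_mod_cast this

end FibSec

set_option maxHeartbeats 1000000 in
theorem stmt13aux (α : ℝ) (hgt : 1 < α)
    (d : ℕ) (c : ℕ → ℤ) (t : ℕ → ℤ) (C : ℤ)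
    (hd : 1 ≤ d) (hc0 : c 0 ≠ 0) (hC : 0 ≤ C)
    (hrect : ∀ m, t (m + d) = ∑ i ∈ Finset.range d, c i * t (m + i))
    (habs : ∀ m, |α ^ m - (t m : ℝ)| ≤ (C : ℝ))
    (F : ℕ → ℕ) (h1 : F 1 = 1) (h2 : F 2 = 1)
    (hrec : ∀ n : ℕ, 1 ≤ n → F (n + 2) = F (n + 1) + F n) :
    ∀ N : ℕ, ∃ n : ℕ, N ≤ n ∧ 1 ≤ n ∧ IsCompositeInt ⌊α ^ F (F n)⌋ := by
  intro N
  by_contra hcon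
  push_neg at hcon
  -- abbreviations
  set g : ℕ → ℤ := fun n => ⌊α ^ F (F n)⌋ with hg
  set u : ℕ → ℤ := fun n => t (F (F n)) with hu
  -- floor bounds
  have hfl : ∀ m : ℕ, t m - C ≤ ⌊α ^ m⌋ ∧ ⌊α ^ m⌋ ≤ t m + C := by
    intro m
    have h := abs_le.mp (habs m)
    constructor
    · rw [Int.le_floor]
      push_cast
      linarith [h.2]
    · have h2' : α ^ m ≤ ((t m + C : ℤ) : ℝ) := by push_cast; linarith [h.1]
      calc ⌊α ^ m⌋ ≤ ⌊((t m + C : ℤ) : ℝ)⌋ := Int.floor_le_floor h2'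
      _ = t m + C := Int.floor_intCast _
  have hcorr : ∀ n, g n - u n ∈ Finset.Icc (-C) C := by
    intro n
    have := hfl (F (F n))
    simp only [hg, hu, Finset.mem_Icc]
    omega
  -- growth
  have hgrow : ∀ B : ℤ, ∃ N', ∀ n, N' ≤ n → B < g n := by
    intro B
    obtain ⟨K, hK⟩ := pow_unbounded_of_one_lt (((B : ℝ)) + 1) hgt
    refine ⟨4 * K + 4, fun n hn => ?_⟩
    have hn1 : 1 ≤ n := by omega
    have hFn : 1 ≤ F n := fib_my_pos F h1 h2 hrec n hn1
    have hg1 := fib_my_grow F h1 h2 hrec n hn1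
    have hg2 := fib_my_grow F h1 h2 hrec (F n) hFn
    have hKm : K ≤ F (F n) := by omega
    have : ((B : ℝ)) + 1 ≤ α ^ F (F n) := by
      calc ((B : ℝ)) + 1 ≤ α ^ K := hK.le
      _ ≤ α ^ F (F n) := pow_le_pow_right₀ hgt.le hKm
    have : B + 1 ≤ g n := by
      rw [hg, Int.le_floor]
      push_cast
      linarith
    omega
  -- periodicity of u
  have hper : ∀ M : ℕ, M ≠ 0 → IsUnit ((c 0 : ZMod M)) →
      ∃ L, 1 ≤ L ∧ ∀ n, 1 ≤ n → ∀ k, ((u (n + k * L) : ZMod M)) = ((u n : ZMod M)) := by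
    intro M hM hunit
    obtain ⟨T, hT1, hT⟩ := rec_periodic_s13 d hd c t hrect M hM hunit
    obtain ⟨T2, hT21, hT2⟩ := fib_my_period F h1 h2 hrec T (by omega)
    obtain ⟨L, hL1, hL⟩ := fib_my_period F h1 h2 hrec T2 (by omega)
    have htiter : ∀ m j, ((t (m + j * T) : ZMod M)) = ((t m : ZMod M)) := by
      intro m j
      induction j with
      | zero => simp
      | succ i ih =>
        rw [show m + (i + 1) * T = (m + i * T) + T from by ring, hT, ih]
    have hF2iter : ∀ m, 1 ≤ m → ∀ j, ((F (m + j * T2) : ZMod T)) = ((F m : ZMod T)) := by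
      intro m hm j
      induction j with
      | zero => simp
      | succ i ih =>
        rw [show m + (i + 1) * T2 = (m + i * T2) + T2 from by ring, hT2 _ (by omega), ih]
    refine ⟨L, hL1, fun n hn k => ?_⟩
    -- step 1 : F (n + k*L) = F n + j * T2 for some j
    have hFiter : ∀ j, ((F (n + j * L) : ZMod T2)) = ((F n : ZMod T2)) := by
      intro j
      induction j with
      | zero => simp
      | succ i ih =>
        rw [show n + (i + 1) * L = (n + i * L) + L from by ring, hL _ (by omega), ih]
    have hmod1 : F n ≡ F (n + k * L) [MOD T2] :=
      ((ZMod.natCast_eq_natCast_iff _ _ _).mp (hFiter k)).symm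
    have hle1 : F n ≤ F (n + k * L) :=
      fib_my_mono F h1 h2 hrec n (n + k * L) hn (by omega)
    obtain ⟨j, hj⟩ := (Nat.modEq_iff_dvd' hle1).mp hmod1
    rw [Nat.mul_comm T2 j] at hj
    have hFeq : F (n + k * L) = F n + j * T2 := by omega
    -- step 2 : F (F (n + k*L)) = F (F n) + i * T for some i
    have hFn1 : 1 ≤ F n := fib_my_pos F h1 h2 hrec n hn
    have hmod2 : F (F n) ≡ F (F (n + k * L)) [MOD T] := by
      rw [hFeq]
      exact ((ZMod.natCast_eq_natCast_iff _ _ _).mp (hF2iter (F n) hFn1 j)).symm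
    have hle2 : F (F n) ≤ F (F (n + k * L)) :=
      fib_my_mono F h1 h2 hrec (F n) (F (n + k * L)) hFn1 hle1
    obtain ⟨i, hi⟩ := (Nat.modEq_iff_dvd' hle2).mp hmod2
    rw [Nat.mul_comm T i] at hi
    have hFFeq : F (F (n + k * L)) = F (F n) + i * T := by omega
    simp only [hu]
    rw [hFFeq]
    exact htiter (F (F n)) i
  -- basic threshold: beyond N1 all values are prime and large
  obtain ⟨N2, hN2⟩ := hgrow (max 1 |c 0|)
  set N1 := max N2 (max N 1) with hN1
  have hN1prop : ∀ n, N1 ≤ n → Prime (g n) ∧ 1 < g n ∧ |c 0| < g n := by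
    intro n hn
    have hbig := hN2 n (le_trans (le_max_left _ _) hn)
    have h1n : 1 < g n := lt_of_le_of_lt (le_max_left 1 |c 0|) hbig
    have hnc := hcon n (by omega) (by omega)
    rw [IsCompositeInt] at hnc
    push_neg at hnc
    exact ⟨hnc h1n, h1n, lt_of_le_of_lt (le_max_right 1 |c 0|) hbig⟩
  -- main claim
  have claim : ∀ E : Finset ℤ, ∃ L r, 1 ≤ L ∧ N1 ≤ r ∧
      ∀ k : ℕ, g (r + k * L) - u (r + k * L) ∉ E := by
    intro E
    induction E using Finset.induction_on with
    | empty => exact ⟨1, N1, le_refl 1, le_refl N1, fun k => Finset.notMem_empty _⟩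
    | @insert e E' he ih =>
      obtain ⟨L, r, hL1, hrN, hprop⟩ := ih
      by_cases hcase : ∃ K, ∀ k, K ≤ k → g (r + k * L) - u (r + k * L) ≠ e
      · obtain ⟨K, hK⟩ := hcase
        refine ⟨L, r + K * L, hL1, by omega, fun k => ?_⟩
        rw [show r + K * L + k * L = r + (K + k) * L from by ring]
        intro hmem
        rcases Finset.mem_insert.mp hmem with hmem | hmem
        · exact hK (K + k) (by omega) hmem
        · exact hprop (K + k) hmem
      · push_neg at hcase
        -- a first witness gives the prime p
        obtain ⟨k0, _, hk0⟩ := hcase 0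
        set n0 := r + k0 * L with hn0
        have hn0N : N1 ≤ n0 := by omega
        obtain ⟨hp, hp1, hpc⟩ := hN1prop n0 hn0N
        set p : ℤ := g n0 with hpdef
        set M : ℕ := p.toNat with hMdef
        have hMp : (M : ℤ) = p := Int.toNat_of_nonneg (by omega)
        have hM : M ≠ 0 := by omega
        have hMprime : Nat.Prime M := by
          have hna : p.natAbs = M := by omega
          rw [← hna]
          exact Int.prime_iff_natAbs_prime.mp hp
        haveI : Fact (Nat.Prime M) := ⟨hMprime⟩
        have hunit : IsUnit ((c 0 : ZMod M)) := by
          have hne : ((c 0 : ZMod M)) ≠ 0 := by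
            intro h0
            have hdvd : (M : ℤ) ∣ c 0 := (ZMod.intCast_zmod_eq_zero_iff_dvd _ _).mp h0
            have hle := Int.le_of_dvd (abs_pos.mpr hc0) ((dvd_abs _ _).mpr hdvd)
            omega
          exact hne.isUnit
        obtain ⟨Lp, hLp1, hLp⟩ := hper M hM hunit
        obtain ⟨N3, hN3⟩ := hgrow p
        refine ⟨L * Lp, n0 + N3 * (L * Lp), Nat.mul_pos hL1 hLp1, by omega, fun k => ?_⟩
        set n := n0 + N3 * (L * Lp) + k * (L * Lp) with hndef
        have hnform : n = n0 + ((N3 + k) * L) * Lp := by rw [hndef]; ring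
        have hnold : n = r + (k0 + (N3 + k) * Lp) * L := by rw [hndef, hn0]; ring
        have hnN3 : N3 ≤ n := by
          have : 1 ≤ L * Lp := Nat.mul_pos hL1 hLp1
          calc N3 ≤ N3 * (L * Lp) := Nat.le_mul_of_pos_right _ (by omega)
          _ ≤ n := by omega
        have hnN1 : N1 ≤ n := by omega
        intro hmem
        rcases Finset.mem_insert.mp hmem with hmem | hmem
        · -- correction equals e : contradiction via divisibility
          have hucong : ((u n : ZMod M)) = ((u n0 : ZMod M)) := by
            rw [hnform]
            exact hLp n0 (by omega) ((N3 + k) * L)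
          have hgeq : (g n : ZMod M) = ((g n0 : ZMod M)) := by
            have h1' : g n = u n + e := by omega
            have h2' : g n0 = u n0 + e := by omega
            rw [h1', h2']
            push_cast
            rw [hucong]
          have hzero : ((g n : ZMod M)) = 0 := by
            rw [hgeq, ← hpdef, ← hMp]
            push_cast
            simp
          have hdvd : (M : ℤ) ∣ g n := (ZMod.intCast_zmod_eq_zero_iff_dvd _ _).mp hzero
          rw [hMp] at hdvd
          obtain ⟨hgprime, hg1, _⟩ := hN1prop n hnN1
          obtain ⟨w, hw⟩ := hdvd
          rcases (hgprime.irreducible.isUnit_or_isUnit hw) with hup | huw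
          · exact hp.not_unit hup
          · rcases Int.isUnit_iff.mp huw with rfl | rfl
            · have : p < g n := hN3 n hnN3
              omega
            · omega
        · exact hprop (k0 + (N3 + k) * Lp) (hnold ▸ hmem)
  obtain ⟨L, r, hL1, hrN, hprop⟩ := claim (Finset.Icc (-C) C)
  exact hprop 0 (by simpa using hcorr (r + 0 * L))


theorem stmt13 (α : ℝ) (hα : IsPisot α ∨ IsSalem α)
    (F : ℕ → ℕ) (h1 : F 1 = 1) (h2 : F 2 = 1)
    (hrec : ∀ n : ℕ, 1 ≤ n → F (n + 2) = F (n + 1) + F n) :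
    ∀ N : ℕ, ∃ n : ℕ, N ≤ n ∧ 1 ≤ n ∧ IsCompositeInt ⌊α ^ F (F n)⌋ := by
  have hgt : 1 < α := by
    rcases hα with h | h
    · exact h.1
    · exact h.1
  obtain ⟨d, c, t, C, hd, hc0, hC, hrect, habs⟩ := alg_core α hα
  exact stmt13aux α hgt d c t C hd hc0 hC hrect habs F h1 h2 hrec
end
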